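/- Let n ∈ ℕ, let r₁ ≥ r₂ ≥ … ≥ rₙ > 0 with Σᵢ rᵢ = 1, let R > 1, β := (ln R)/(1+r₁), let ξ satisfy 0 < ξ < (n+1)/e, and set λ₁ := ⌈ln((n+1)/ξ)/(β·rₙ)⌉ and k₁ := (ξ/(n+1))·e^{−βλ₁}. Let y ∈ ℝⁿ and q ∈ ℕ with q > λ₁, and suppose that for every real t with 0 < t ≤ q, every nonzero vector of the lattice a(βt)·u(y)·ℤ^{n+1} has Euclidean norm at least ξ. Then for every real Q with 1 ≤ Q < e^{β(q−λ₁)}, there is no nonzero integer vector (m, p₁, …, pₙ) ∈ ℤ^{n+1} satisfying |m| ≤ Q and |m·yᵢ − pᵢ| < (k₁/n)·Q^{−rᵢ} for all 1 ≤ i ≤ n. -/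
import Mathlib


/- STATEMENT 7: Proposition `result`: no small nonzero integer solutions to the
simultaneous system, given non-divergence of the lattice orbit. -/

open Set Matrix

/-- the diagonal matrix `a(t) = diag(e^t, e^{-r₁ t}, …, e^{-rₙ t})`. -/
noncomputable def aMat (n : ℕ) (r : Fin n → ℝ) (t : ℝ) :
    Matrix (Fin (n + 1)) (Fin (n + 1)) ℝ :=
  Matrix.diagonal (Fin.cases (Real.exp t) (fun i => Real.exp (-(r i * t))))

/-- the unipotent matrix `u(y)` with first row `(1, y₁, …, yₙ)`, identity below. -/
def uMat (n : ℕ) (y : Fin n → ℝ) : Matrix (Fin (n + 1)) (Fin (n + 1)) ℝ :=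
  Matrix.of fun i j =>
    if i = j then 1
    else if i = 0 then Fin.cases 0 (fun j' => y j') j
    else 0

/-- Euclidean norm on `ℝ^{n+1}`. -/
noncomputable def euclNorm {n : ℕ} (w : Fin (n + 1) → ℝ) : ℝ :=
  Real.sqrt (∑ i, (w i) ^ 2)

/-- pigeonhole: a nonzero integer vector in a weighted box with `p·c ≡ 0 mod m`. -/
lemma pigeon_aux (n : ℕ) (hn : 1 ≤ n) (r : Fin n → ℝ) (hr_pos : ∀ i, 0 < r i)
    (hr_sum : ∑ i, r i = 1) (p : Fin n → ℤ) (m : ℤ) (hm : m ≠ 0) :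
    ∃ c : Fin n → ℤ, c ≠ 0 ∧ (∀ j, |(c j : ℝ)| ≤ (m.natAbs : ℝ) ^ (r j)) ∧
      m ∣ ∑ j, p j * c j := by
  set M : ℕ := m.natAbs with hM
  have hM1 : 1 ≤ M := Nat.one_le_iff_ne_zero.mpr (Int.natAbs_ne_zero.mpr hm)
  have hMR : (1:ℝ) ≤ (M:ℝ) := by exact_mod_cast hM1
  set B : Fin n → ℕ := fun j => ⌊(M:ℝ) ^ (r j)⌋₊ with hB
  have hBle : ∀ j, (B j : ℝ) ≤ (M:ℝ) ^ (r j) := fun j =>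
    Nat.floor_le (Real.rpow_nonneg (by linarith) _)
  have hcard : M < ∏ j, (B j + 1) := by
    have h1 : (M:ℝ) < ∏ j : Fin n, ((B j : ℝ) + 1) := by
      have hlt : ∀ j : Fin n, (M:ℝ) ^ (r j) < (B j : ℝ) + 1 := fun j =>
        Nat.lt_floor_add_one _
      have hpos : ∀ j : Fin n, (0:ℝ) < (M:ℝ) ^ (r j) := fun j =>
        Real.rpow_pos_of_pos (by linarith) _
      calc (M:ℝ) = (M:ℝ) ^ ((1:ℝ)) := by rw [Real.rpow_one]
        _ = (M:ℝ) ^ (∑ j, r j) := by rw [hr_sum]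
        _ = ∏ j : Fin n, (M:ℝ) ^ (r j) :=
            Real.rpow_sum_of_pos (by linarith) _ _
        _ < ∏ j : Fin n, ((B j : ℝ) + 1) := by
            refine Finset.prod_lt_prod_of_nonempty (fun j _ => hpos j)
              (fun j _ => hlt j) ?_
            exact Finset.univ_nonempty_iff.mpr ⟨⟨0, by omega⟩⟩
    have h2 : ((M:ℕ):ℝ) < ((∏ j, (B j + 1) : ℕ) : ℝ) := by
      push_cast
      exact h1
    exact_mod_cast h2
  haveI : NeZero M := ⟨by omega⟩
  -- pigeonhole
  have hcard' : Fintype.card (ZMod M) < Fintype.card (∀ j : Fin n, Fin (B j + 1)) := by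
    rw [ZMod.card, Fintype.card_pi]
    simpa using hcard
  obtain ⟨a, b, hab, hfab⟩ := Fintype.exists_ne_map_eq_of_card_lt
    (fun c : (∀ j : Fin n, Fin (B j + 1)) => ((∑ j, p j * ((c j : ℕ) : ℤ) : ℤ) : ZMod M))
    hcard'
  refine ⟨fun j => ((a j : ℕ) : ℤ) - ((b j : ℕ) : ℤ), ?_, ?_, ?_⟩
  · intro h0
    apply hab
    funext j
    have := congrFun h0 j
    simp only [Pi.zero_apply, sub_eq_zero] at this
    exact Fin.ext (by exact_mod_cast this)
  · intro j
    have ha' : ((a j : ℕ) : ℝ) ≤ (B j : ℝ) := by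
      exact_mod_cast Nat.lt_succ_iff.mp (a j).is_lt
    have hb' : ((b j : ℕ) : ℝ) ≤ (B j : ℝ) := by
      exact_mod_cast Nat.lt_succ_iff.mp (b j).is_lt
    have ha0 : (0:ℝ) ≤ ((a j : ℕ) : ℝ) := by positivity
    have hb0 : (0:ℝ) ≤ ((b j : ℕ) : ℝ) := by positivity
    rw [abs_le]
    constructor
    · push_cast
      nlinarith [hBle j]
    · push_cast
      nlinarith [hBle j]
  · have : ((∑ j, p j * (((a j : ℕ) : ℤ) - ((b j : ℕ) : ℤ)) : ℤ) : ZMod M) = 0 := by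
      push_cast [Finset.sum_sub_distrib, mul_sub]
      rw [sub_eq_zero]
      exact_mod_cast hfab
    have hdvd : (M : ℤ) ∣ ∑ j, p j * (((a j : ℕ) : ℤ) - ((b j : ℕ) : ℤ)) :=
      (ZMod.intCast_zmod_eq_zero_iff_dvd _ _).mp this
    exact (Int.natAbs_dvd).mp hdvd

/-- explicit formula for the lattice vector. -/
lemma mulVec_formula (n : ℕ) (r : Fin n → ℝ) (t : ℝ) (y : Fin n → ℝ)
    (x : Fin (n + 1) → ℝ) :
    (aMat n r t * uMat n y).mulVec x =
      Fin.cons (Real.exp t * (x 0 + ∑ j, y j * x j.succ))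
        (fun j => Real.exp (-(r j * t)) * x j.succ) := by
  have hu : (uMat n y).mulVec x =
      Fin.cons (x 0 + ∑ j, y j * x j.succ) (fun j => x j.succ) := by
    funext i
    induction i using Fin.cases with
    | zero =>
      simp only [Matrix.mulVec, dotProduct, Fin.cons_zero]
      rw [Fin.sum_univ_succ]
      have h0 : uMat n y 0 0 * x 0 = x 0 := by simp [uMat]
      have hs : ∀ j : Fin n, uMat n y 0 j.succ * x j.succ = y j * x j.succ := by
        intro j
        have : uMat n y 0 j.succ = y j := by
          simp only [uMat, Matrix.of_apply]
          rw [if_neg (Ne.symm (Fin.succ_ne_zero j))]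
          simp
        rw [this]
      rw [h0]
      exact congrArg (x 0 + ·) (Finset.sum_congr rfl fun j _ => hs j)
    | succ i' =>
      simp only [Matrix.mulVec, dotProduct, Fin.cons_succ]
      rw [Finset.sum_eq_single i'.succ]
      · simp [uMat]
      · intro j _ hj
        simp [uMat, (Ne.symm hj), Fin.succ_ne_zero]
      · simp
  rw [← Matrix.mulVec_mulVec, hu]
  funext i
  rw [aMat, Matrix.mulVec_diagonal]
  induction i using Fin.cases with
  | zero => simp
  | succ i' => simp

lemma euclNorm_lt_of_forall (n : ℕ) (hn : 1 ≤ n) (w : Fin (n + 1) → ℝ) (a : ℝ)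
    (ha : 0 < a) (hw : ∀ i, |w i| ≤ a / ((n:ℝ) + 1)) : euclNorm w < a := by
  have hn1 : (0:ℝ) < (n:ℝ) + 1 := by positivity
  rw [euclNorm, Real.sqrt_lt' ha]
  have hsum : ∑ i, (w i) ^ 2 ≤ ∑ _i : Fin (n + 1), (a / ((n:ℝ) + 1)) ^ 2 := by
    refine Finset.sum_le_sum fun i _ => ?_
    rw [← sq_abs]
    exact pow_le_pow_left₀ (abs_nonneg _) (hw i) 2
  rw [Finset.sum_const, Finset.card_univ, Fintype.card_fin] at hsum
  have : ((n:ℝ) + 1) * (a / ((n:ℝ) + 1)) ^ 2 < a ^ 2 := by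
    have h2 : (1:ℝ) < (n:ℝ) + 1 := by
      have : (1:ℝ) ≤ (n:ℝ) := by exact_mod_cast hn
      linarith
    have h3 := div_lt_self (by positivity : (0:ℝ) < a ^ 2) h2
    calc ((n:ℝ) + 1) * (a / ((n:ℝ) + 1)) ^ 2 = a ^ 2 / ((n:ℝ) + 1) := by
          field_simp
      _ < a ^ 2 := h3
  calc ∑ i, (w i) ^ 2 ≤ ((n:ℝ) + 1) * (a / ((n:ℝ) + 1)) ^ 2 := by
        simpa [nsmul_eq_mul] using hsum
    _ < a ^ 2 := this

theorem stmt7 (n : ℕ) (hn : 1 ≤ n) (r : Fin n → ℝ)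
    (hr_pos : ∀ i, 0 < r i) (hr_sorted : ∀ i j : Fin n, i ≤ j → r j ≤ r i)
    (hr_sum : ∑ i, r i = 1)
    (R : ℝ) (hR : 1 < R) (β : ℝ) (hβ : β = Real.log R / (1 + r ⟨0, by omega⟩))
    (ξ : ℝ) (hξ_pos : 0 < ξ) (hξ : ξ < ((n : ℝ) + 1) / Real.exp 1)
    (lam1 : ℤ) (hlam1 : lam1 = ⌈Real.log (((n : ℝ) + 1) / ξ) / (β * r ⟨n - 1, by omega⟩)⌉)
    (k₁ : ℝ) (hk₁ : k₁ = ξ / ((n : ℝ) + 1) * Real.exp (-β * lam1))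
    (y : Fin n → ℝ) (q : ℕ) (hq : lam1 < (q : ℤ))
    -- the lattice `a(βt)u(y)ℤ^{n+1}` has no nonzero vector shorter than `ξ`, for `0 < t ≤ q`
    (hlat : ∀ t : ℝ, 0 < t → t ≤ (q : ℝ) → ∀ v : Fin (n + 1) → ℤ, v ≠ 0 →
      ξ ≤ euclNorm ((aMat n r (β * t) * uMat n y).mulVec (fun j => (v j : ℝ)))) :
    ∀ Q : ℝ, 1 ≤ Q → Q < Real.exp (β * ((q : ℝ) - (lam1 : ℝ))) →
      ¬ ∃ v : Fin (n + 1) → ℤ, v ≠ 0 ∧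
        |(v 0 : ℝ)| ≤ Q ∧
        ∀ i : Fin n, |(v 0 : ℝ) * y i - (v i.succ : ℝ)| < (k₁ / n) * Q ^ (-(r i)) := by
  intro Q hQ1 hQ2
  rintro ⟨v, hv, hmQ, hsol⟩
  have hnR : (1:ℝ) ≤ (n:ℝ) := by exact_mod_cast hn
  have hn1 : (0:ℝ) < (n:ℝ) + 1 := by linarith
  have hr0 : 0 < r ⟨0, by omega⟩ := hr_pos _
  have hβpos : 0 < β := by
    rw [hβ]
    exact div_pos (Real.log_pos hR) (by linarith)
  have hrn_pos : 0 < r ⟨n - 1, by omega⟩ := hr_pos _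
  have hrn_le : ∀ j : Fin n, r ⟨n - 1, by omega⟩ ≤ r j := by
    intro j
    refine hr_sorted j ⟨n - 1, by omega⟩ ?_
    have hjlt := j.isLt
    rw [Fin.le_def]
    simp only []
    omega
  have he1 : (2:ℝ) ≤ Real.exp 1 := by
    have := Real.add_one_le_exp 1
    linarith
  have hξn1 : ξ < (n:ℝ) + 1 := by
    have : ((n:ℝ) + 1) / Real.exp 1 ≤ ((n:ℝ) + 1) / 2 :=
      div_le_div_of_nonneg_left (by linarith) (by norm_num) he1
    linarith [hξ, this]
  have hlog_pos : 0 < Real.log (((n:ℝ) + 1) / ξ) :=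
    Real.log_pos ((one_lt_div hξ_pos).mpr hξn1)
  have hlam_pos : (0:ℤ) < lam1 := by
    rw [hlam1]
    exact Int.ceil_pos.mpr (div_pos hlog_pos (mul_pos hβpos hrn_pos))
  have hlam1R : (1:ℝ) ≤ (lam1:ℝ) := by exact_mod_cast hlam_pos
  have hlam_ge : Real.log (((n:ℝ) + 1) / ξ) / (β * r ⟨n - 1, by omega⟩) ≤ (lam1:ℝ) := by
    rw [hlam1]; exact Int.le_ceil _
  have hkeyβ : Real.log (((n:ℝ) + 1) / ξ) ≤ r ⟨n - 1, by omega⟩ * (β * (lam1:ℝ)) := by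
    rw [div_le_iff₀ (mul_pos hβpos hrn_pos)] at hlam_ge
    nlinarith
  have hkey : ∀ j : Fin n, Real.exp (-(r j * (β * (lam1:ℝ)))) ≤ ξ / ((n:ℝ) + 1) := by
    intro j
    have h1 : Real.log (((n:ℝ) + 1) / ξ) ≤ r j * (β * (lam1:ℝ)) := by
      refine hkeyβ.trans ?_
      have hb : 0 ≤ β * (lam1:ℝ) := by positivity
      exact mul_le_mul_of_nonneg_right (hrn_le j) hb
    have h2 : Real.exp (-(r j * (β * (lam1:ℝ)))) ≤
        Real.exp (-Real.log (((n:ℝ) + 1) / ξ)) :=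
      Real.exp_le_exp.mpr (by linarith)
    refine h2.trans_eq ?_
    rw [Real.exp_neg, Real.exp_log (by positivity)]
    rw [inv_div]
  have hk1_pos : 0 < k₁ := by
    rw [hk₁]; positivity
  have hk1_le : k₁ ≤ ξ / ((n:ℝ) + 1) := by
    rw [hk₁]
    have : Real.exp (-β * (lam1:ℝ)) ≤ 1 := by
      rw [Real.exp_le_one_iff]
      nlinarith
    nlinarith [div_pos hξ_pos hn1]
  have hk1_lt1 : k₁ < 1 := by
    have : ξ / ((n:ℝ) + 1) < 1 := (div_lt_one hn1).mpr hξn1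
    linarith
  by_cases hm0 : v 0 = 0
  · -- then all coordinates vanish, contradicting v ≠ 0
    apply hv
    funext i
    induction i using Fin.cases with
    | zero => exact hm0
    | succ i' =>
      have h := hsol i'
      rw [hm0] at h
      have hQr : Q ^ (-(r i')) ≤ 1 :=
        Real.rpow_le_one_of_one_le_of_nonpos hQ1 (by linarith [hr_pos i'])
      have hk1n : k₁ / (n:ℝ) ≤ k₁ := div_le_self hk1_pos.le hnR
      have habs : |(v i'.succ : ℝ)| < 1 := by
        have h2 : (k₁ / (n:ℝ)) * Q ^ (-(r i')) ≤ k₁ := by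
          calc (k₁ / (n:ℝ)) * Q ^ (-(r i')) ≤ (k₁ / (n:ℝ)) * 1 :=
                mul_le_mul_of_nonneg_left hQr (by positivity)
            _ = k₁ / (n:ℝ) := mul_one _
            _ ≤ k₁ := hk1n
        calc |(v i'.succ : ℝ)| = |(0:ℝ) * y i' - (v i'.succ : ℝ)| := by
              rw [zero_mul, zero_sub, abs_neg]
          _ < (k₁ / (n:ℝ)) * Q ^ (-(r i')) := by exact_mod_cast h
          _ ≤ k₁ := h2
          _ < 1 := hk1_lt1
      have : |v i'.succ| < 1 := by exact_mod_cast (by rwa [← Int.cast_abs] at habs :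
        ((|v i'.succ| : ℤ) : ℝ) < 1)
      simpa using Int.abs_lt_one_iff.mp this
  · -- main case: v 0 ≠ 0
    set m : ℤ := v 0 with hm
    set M : ℕ := m.natAbs with hMdef
    have hM1 : 1 ≤ M := Nat.one_le_iff_ne_zero.mpr (Int.natAbs_ne_zero.mpr hm0)
    have hMR1 : (1:ℝ) ≤ (M:ℝ) := by exact_mod_cast hM1
    have hMRpos : (0:ℝ) < (M:ℝ) := by linarith
    have hMabs : ((M:ℕ):ℝ) = |(m:ℝ)| := by
      rw [hMdef]
      push_cast [Nat.cast_natAbs]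
      ring
    have hMQ : (M:ℝ) ≤ Q := by rw [hMabs]; exact hmQ
    obtain ⟨c, hc0, hcle, hcdvd⟩ :=
      pigeon_aux n hn r hr_pos hr_sum (fun j => v j.succ) m hm0
    obtain ⟨d, hd⟩ := hcdvd
    set t : ℝ := (lam1:ℝ) + Real.log (M:ℝ) / β with ht
    have hlogM0 : 0 ≤ Real.log (M:ℝ) := Real.log_nonneg hMR1
    have hβt : β * t = β * (lam1:ℝ) + Real.log (M:ℝ) := by
      rw [ht]; field_simp
    have ht0 : 0 < t := by
      rw [ht]; positivity
    have htq : t ≤ (q:ℝ) := by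
      have hlogQ : Real.log Q < β * ((q:ℝ) - (lam1:ℝ)) := by
        rw [← Real.exp_lt_exp, Real.exp_log (by linarith)]
        exact hQ2
      have hlogM : Real.log (M:ℝ) ≤ Real.log Q :=
        Real.log_le_log hMRpos hMQ
      have h3 : Real.log (M:ℝ) < β * ((q:ℝ) - (lam1:ℝ)) := lt_of_le_of_lt hlogM hlogQ
      have h4 : Real.log (M:ℝ) / β < (q:ℝ) - (lam1:ℝ) := by
        rw [div_lt_iff₀ hβpos, mul_comm]
        exact h3
      rw [ht]; linarith
    obtain ⟨z, hz0, hzsucc, hzne⟩ : ∃ z : Fin (n + 1) → ℤ,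
        z 0 = -d ∧ (∀ j : Fin n, z j.succ = c j) ∧ z ≠ 0 := by
      refine ⟨Fin.cons (-d) c, rfl, fun j => rfl, ?_⟩
      obtain ⟨j, hj⟩ := Function.ne_iff.mp hc0
      intro hzz
      apply hj
      have := congrFun hzz j.succ
      simpa using this
    have key := hlat t ht0 htq z hzne
    rw [mulVec_formula] at key
    -- ε estimates
    have hεle : ∀ j : Fin n,
        |(m:ℝ) * y j - ((v j.succ : ℤ):ℝ)| ≤ (k₁ / (n:ℝ)) * (M:ℝ) ^ (-(r j)) := by
      intro j
      refine (hsol j).le.trans ?_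
      refine mul_le_mul_of_nonneg_left ?_ (by positivity)
      exact Real.rpow_le_rpow_of_nonpos hMRpos hMQ (neg_nonpos.mpr (hr_pos j).le)
    have hterm : ∀ j : Fin n,
        |((m:ℝ) * y j - ((v j.succ : ℤ):ℝ)) * ((c j : ℤ):ℝ)| ≤ k₁ / (n:ℝ) := by
      intro j
      rw [abs_mul]
      have h3 : (0:ℝ) ≤ (k₁ / (n:ℝ)) * (M:ℝ) ^ (-(r j)) := by positivity
      calc |(m:ℝ) * y j - ((v j.succ : ℤ):ℝ)| * |((c j : ℤ):ℝ)|
          ≤ ((k₁ / (n:ℝ)) * (M:ℝ) ^ (-(r j))) * ((M:ℝ) ^ (r j)) :=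
            mul_le_mul (hεle j) (hcle j) (abs_nonneg _) h3
        _ = k₁ / (n:ℝ) := by
            rw [mul_assoc, ← Real.rpow_add hMRpos]
            simp
    have hsumε : |∑ j, ((m:ℝ) * y j - ((v j.succ : ℤ):ℝ)) * ((c j : ℤ):ℝ)| ≤ k₁ := by
      calc |∑ j, ((m:ℝ) * y j - ((v j.succ : ℤ):ℝ)) * ((c j : ℤ):ℝ)|
          ≤ ∑ j, |((m:ℝ) * y j - ((v j.succ : ℤ):ℝ)) * ((c j : ℤ):ℝ)| :=
            Finset.abs_sum_le_sum_abs _ _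
        _ ≤ ∑ _j : Fin n, k₁ / (n:ℝ) := Finset.sum_le_sum fun j _ => hterm j
        _ = k₁ := by
            rw [Finset.sum_const, Finset.card_univ, Fintype.card_fin, nsmul_eq_mul]
            field_simp
    -- the key algebraic identity
    have hmSval : (m:ℝ) * (((z 0 : ℤ):ℝ) + ∑ j, y j * ((z j.succ : ℤ):ℝ))
        = ∑ j, ((m:ℝ) * y j - ((v j.succ : ℤ):ℝ)) * ((c j : ℤ):ℝ) := by
      have hd' : (∑ j, ((v j.succ : ℤ):ℝ) * ((c j : ℤ):ℝ)) = (m:ℝ) * (d:ℝ) := by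
        exact_mod_cast congrArg (fun x : ℤ => (x:ℝ)) hd
      have hsc : (∑ j, ((m:ℝ) * y j - ((v j.succ : ℤ):ℝ)) * ((c j : ℤ):ℝ))
          = (∑ j, (m:ℝ) * (y j * ((c j : ℤ):ℝ)))
            - ∑ j, ((v j.succ : ℤ):ℝ) * ((c j : ℤ):ℝ) := by
        rw [← Finset.sum_sub_distrib]
        exact Finset.sum_congr rfl fun j _ => by ring
      simp only [hz0, hzsucc]
      push_cast
      rw [hsc, hd', mul_add, Finset.mul_sum]
      ring
    have hSle : |((z 0 : ℤ):ℝ) + ∑ j, y j * ((z j.succ : ℤ):ℝ)| ≤ k₁ / (M:ℝ) := by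
      have habs2 : |(m:ℝ)| * |((z 0 : ℤ):ℝ) + ∑ j, y j * ((z j.succ : ℤ):ℝ)| ≤ k₁ := by
        rw [← abs_mul, hmSval]
        exact hsumε
      rw [← hMabs] at habs2
      rw [le_div_iff₀ hMRpos, mul_comm]
      exact habs2
    -- coordinate bounds
    have hcoord0 : |Real.exp (β * t) * (((z 0 : ℤ):ℝ) + ∑ j, y j * ((z j.succ : ℤ):ℝ))|
        ≤ ξ / ((n:ℝ) + 1) := by
      rw [abs_mul, abs_of_pos (Real.exp_pos _)]
      have hexpt : Real.exp (β * t) = Real.exp (β * (lam1:ℝ)) * (M:ℝ) := by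
        rw [hβt, Real.exp_add, Real.exp_log hMRpos]
      rw [hexpt]
      calc Real.exp (β * (lam1:ℝ)) * (M:ℝ)
            * |((z 0 : ℤ):ℝ) + ∑ j, y j * ((z j.succ : ℤ):ℝ)|
          ≤ Real.exp (β * (lam1:ℝ)) * (M:ℝ) * (k₁ / (M:ℝ)) := by
            refine mul_le_mul_of_nonneg_left hSle (by positivity)
        _ = Real.exp (β * (lam1:ℝ)) * k₁ := by
            field_simp
        _ = ξ / ((n:ℝ) + 1) := by
            rw [hk₁, show (-β * (lam1:ℝ)) = -(β * (lam1:ℝ)) by ring, Real.exp_neg]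
            rw [← mul_assoc]
            rw [mul_comm (Real.exp (β * (lam1:ℝ))) (ξ / ((n:ℝ) + 1))]
            rw [mul_assoc, mul_inv_cancel₀ (Real.exp_ne_zero _), mul_one]
    have hcoordsucc : ∀ j : Fin n,
        |Real.exp (-(r j * (β * t))) * ((z j.succ : ℤ):ℝ)| ≤ ξ / ((n:ℝ) + 1) := by
      intro j
      rw [abs_mul, abs_of_pos (Real.exp_pos _), hzsucc j]
      have hsplit : Real.exp (-(r j * (β * t))) =
          Real.exp (-(r j * (β * (lam1:ℝ)))) * (M:ℝ) ^ (-(r j)) := by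
        rw [hβt, Real.rpow_def_of_pos hMRpos, ← Real.exp_add]
        congr 1
        ring
      rw [hsplit, mul_assoc]
      have h1 : (M:ℝ) ^ (-(r j)) * |((c j : ℤ):ℝ)| ≤ 1 := by
        calc (M:ℝ) ^ (-(r j)) * |((c j : ℤ):ℝ)|
            ≤ (M:ℝ) ^ (-(r j)) * (M:ℝ) ^ (r j) :=
              mul_le_mul_of_nonneg_left (hcle j) (Real.rpow_nonneg (by linarith) _)
          _ = 1 := by
              rw [← Real.rpow_add hMRpos]
              simp
      calc Real.exp (-(r j * (β * (lam1:ℝ)))) * ((M:ℝ) ^ (-(r j)) * |((c j : ℤ):ℝ)|)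
          ≤ Real.exp (-(r j * (β * (lam1:ℝ)))) * 1 :=
            mul_le_mul_of_nonneg_left h1 (Real.exp_pos _).le
        _ = Real.exp (-(r j * (β * (lam1:ℝ)))) := mul_one _
        _ ≤ ξ / ((n:ℝ) + 1) := hkey j
    refine absurd key (not_le.mpr ?_)
    refine euclNorm_lt_of_forall n hn _ ξ hξ_pos ?_
    intro i
    induction i using Fin.cases with
    | zero =>
      rw [Fin.cons_zero]
      exact hcoord0
    | succ j =>
      rw [Fin.cons_succ]
      exact hcoordsucc j
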